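/- arXiv:2506.09288 — 2 statements merged into one kernel-verified Lean document; each statement's English description precedes it below -/
import Mathlib

section
/- In a (2,∞)-bounded instance, if every remaining agent i holds a bundle X_i contained in the goods relevant only to i and one fixed other agent f(i) (i.e., X_i ⊆ R(M; i, f(i))), then in the envy graph G_{0,X}—with an edge from k to i whenever v_k(X_i) > 0 and k ≠ i—every vertex has in-degree at most 1. -/
/-- In a `(2,∞)`-bounded instance, if every agent `i` holds a bundle contained
in the goods relevant only to `i` and one fixed other agent `f i`, then in the
envy graph `G_{0,X}` (edge `k → i` iff `k ≠ i` and `v k (X i) > 0`) every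
vertex has in-degree at most one. -/
theorem stmt_7 {ι M : Type*} [DecidableEq M] (v : ι → Finset M → ℝ)
    (hadd : ∀ i, ∀ A : Finset M, v i A = ∑ g ∈ A, v i {g})
    (hnn : ∀ i, ∀ g : M, 0 ≤ v i {g})
    (hbounded : ∀ g : M, Set.ncard {k : ι | 0 < v k {g}} ≤ 2)
    (X : ι → Finset M) (f : ι → ι)
    (hX : ∀ i : ι, ∀ g ∈ X i, ∀ k : ι, 0 < v k {g} → k = i ∨ k = f i) :
    ∀ i : ι, {k : ι | k ≠ i ∧ 0 < v k (X i)}.Subsingleton := by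
  intro i a ha b hb
  have key : ∀ k : ι, k ≠ i → 0 < v k (X i) → k = f i := by
    intro k hk hpos
    rw [hadd] at hpos
    obtain ⟨g, hg, hgpos⟩ : ∃ g ∈ X i, 0 < v k {g} := by
      by_contra h
      push_neg at h
      have : ∑ g ∈ X i, v k {g} ≤ 0 :=
        Finset.sum_nonpos fun g hg => h g hg
      linarith
    rcases hX i g hg k hgpos with h | h
    · exact absurd h hk
    · exact h
  rw [key a ha.1 ha.2, key b hb.1 hb.2]
end

section
/- Suppose α = 1/√2 and an allocation X satisfies: (a) for every pair of finalized agents i, j ∈ S and every g ∈ X_j, √2·v_i(X_i) ≥ v_i(X_j \ {g}); and (b) every finalized agent i ∈ S satisfies √2·v_i(X_i) ≥ v_i(U) where U is the union of all non-finalized bundles and the pool. Then assigning all pool goods to any single agent k (finalized last) yields a complete allocation X' in which no finalized agent i ≠ k √2-strongly envies k: for every g ∈ X'_k, √2·v_i(X_i) ≥ v_i(X'_k \ {g}). -/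
/-- If among the finalized agents `S` the allocation is `(1/√2)`-EFX, and every
finalized agent `i` satisfies `√2 · v_i(X_i) ≥ v_i(U)` where `U` is the union
of all non-finalized bundles and the pool, then giving all pool goods to a
single (last-finalized) agent `k ∉ S` yields an allocation in which no agent
`i ∈ S` `√2`-strongly envies `k`'s final bundle `X k ∪ P`. -/
theorem stmt_8 {ι M : Type*} [Fintype ι] [DecidableEq ι] [DecidableEq M]
    (v : ι → Finset M → ℝ)
    (hadd : ∀ i, ∀ A : Finset M, v i A = ∑ g ∈ A, v i {g})
    (hnn : ∀ i, ∀ g : M, 0 ≤ v i {g})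
    (X : ι → Finset M) (P : Finset M) (S : Finset ι) (k : ι) (hk : k ∉ S)
    (hXdisj : ∀ j l : ι, j ≠ l → Disjoint (X j) (X l))
    (hPdisj : ∀ j : ι, Disjoint (X j) P)
    (ha : ∀ i ∈ S, ∀ j ∈ S, ∀ g ∈ X j,
      Real.sqrt 2 * v i (X i) ≥ v i ((X j).erase g))
    (hb : ∀ i ∈ S,
      Real.sqrt 2 * v i (X i) ≥ v i ((Finset.univ \ S).biUnion X ∪ P)) :
    ∀ i ∈ S, ∀ g ∈ X k ∪ P,
      Real.sqrt 2 * v i (X i) ≥ v i ((X k ∪ P).erase g) := by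
  intro i hi g hg
  have hsub : (X k ∪ P).erase g ⊆ (Finset.univ \ S).biUnion X ∪ P := by
    intro x hx
    have hx' := Finset.mem_of_mem_erase hx
    rcases Finset.mem_union.mp hx' with h | h
    · exact Finset.mem_union_left _ (Finset.mem_biUnion.mpr
        ⟨k, Finset.mem_sdiff.mpr ⟨Finset.mem_univ k, hk⟩, h⟩)
    · exact Finset.mem_union_right _ h
  have hmono : v i ((X k ∪ P).erase g) ≤ v i ((Finset.univ \ S).biUnion X ∪ P) := by
    rw [hadd, hadd]
    exact Finset.sum_le_sum_of_subset_of_nonneg hsub (fun x _ _ => hnn i x)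
  exact le_trans hmono (hb i hi)
end
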